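/- arXiv:0710.4389 — 5 statements merged into one kernel-verified Lean document; each statement's English description precedes it below -/
import Mathlib

section
/- For any probability measure γ on a finite set S with γ(s)>0 for all s, and any function f: S → ℝ, we have -log(∑_{s∈S} e^{-f(s)} γ(s)) = inf over probability measures θ on S of [∑_sf(s)θ(s) + R(θ‖γ)], where R(θ‖γ) = ∑_s θ(s) log(θ(s)/γ(s)) is the relative entropy (with the convention 0·log 0 = 0, and R(θ‖γ)=∞ if θ is not absolutely continuous with respect to γ). -/
open Real BigOperators

/-- Relative entropy representation for exponential integrals on a finite set:
`-log ∑ e^{-f} dγ = inf_θ [∑ f dθ + R(θ‖γ)]` where the infimum is over all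
probability vectors `θ` on `S` (with the convention `0 * log 0 = 0`). -/
theorem stmt0 {S : Type*} [Fintype S] (γ : S → ℝ) (hγpos : ∀ s, 0 < γ s)
    (hγsum : ∑ s, γ s = 1) (f : S → ℝ) :
    IsGLB {y : ℝ | ∃ θ : S → ℝ, (∀ s, 0 ≤ θ s) ∧ (∑ s, θ s = 1) ∧
        y = (∑ s, f s * θ s) + ∑ s, θ s * Real.log (θ s / γ s)}
      (-Real.log (∑ s, Real.exp (-f s) * γ s)) := by
  set Z : ℝ := ∑ s, Real.exp (-f s) * γ s with hZdef
  have hne : (Finset.univ : Finset S).Nonempty := by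
    rcases (Finset.univ : Finset S).eq_empty_or_nonempty with h | h
    · rw [h] at hγsum; simp at hγsum
    · exact h
  have hZpos : 0 < Z :=
    Finset.sum_pos (fun s _ => mul_pos (Real.exp_pos _) (hγpos s)) hne
  -- the minimizer
  set θ₀ : S → ℝ := fun s => Real.exp (-f s) * γ s / Z with hθ₀def
  have hθ₀pos : ∀ s, 0 < θ₀ s := fun s =>
    div_pos (mul_pos (Real.exp_pos _) (hγpos s)) hZpos
  have hθ₀sum : ∑ s, θ₀ s = 1 := by
    rw [← Finset.sum_div, ← hZdef, div_self hZpos.ne']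
  constructor
  · -- lower bound
    rintro y ⟨θ, hθnn, hθsum, rfl⟩
    -- key: ∑ θ s * log (θ₀ s / θ s) ≤ 0
    have key : ∑ s, θ s * Real.log (θ₀ s / θ s) ≤ 0 := by
      have hle : ∑ s, θ s * Real.log (θ₀ s / θ s) ≤ ∑ s, (θ₀ s - θ s) := by
        apply Finset.sum_le_sum
        intro s _
        rcases eq_or_lt_of_le (hθnn s) with h0 | hp
        · rw [← h0]; simp [(hθ₀pos s).le]
        · have hdiv : 0 < θ₀ s / θ s := div_pos (hθ₀pos s) hp
          have := Real.log_le_sub_one_of_pos hdiv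
          calc θ s * Real.log (θ₀ s / θ s) ≤ θ s * (θ₀ s / θ s - 1) := by
                exact mul_le_mul_of_nonneg_left this hp.le
            _ = θ₀ s - θ s := by field_simp
      rw [Finset.sum_sub_distrib, hθ₀sum, hθsum] at hle
      linarith
    -- rewrite the objective
    have hterm : ∀ s, f s * θ s + θ s * Real.log (θ s / γ s)
        = -(θ s * Real.log (θ₀ s / θ s)) - θ s * Real.log Z := by
      intro s
      rcases eq_or_lt_of_le (hθnn s) with h0 | hp
      · rw [← h0]; ring
      · have h1 : θ₀ s / θ s = Real.exp (-f s) * γ s / Z / θ s := rfl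
        have hlog : Real.log (θ₀ s / θ s)
            = -f s + Real.log (γ s) - Real.log Z - Real.log (θ s) := by
          rw [h1, Real.log_div (div_pos (mul_pos (Real.exp_pos _) (hγpos s)) hZpos).ne' hp.ne',
            Real.log_div (mul_pos (Real.exp_pos _) (hγpos s)).ne' hZpos.ne',
            Real.log_mul (Real.exp_ne_zero _) (hγpos s).ne', Real.log_exp]
        have hlog2 : Real.log (θ s / γ s) = Real.log (θ s) - Real.log (γ s) :=
          Real.log_div hp.ne' (hγpos s).ne'
        rw [hlog, hlog2]; ring
    have : (∑ s, f s * θ s) + ∑ s, θ s * Real.log (θ s / γ s)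
        = -(∑ s, θ s * Real.log (θ₀ s / θ s)) - Real.log Z := by
      rw [← Finset.sum_add_distrib]
      simp_rw [hterm]
      rw [Finset.sum_sub_distrib, ← Finset.sum_neg_distrib, ← Finset.sum_mul,
        hθsum, one_mul]
    rw [this]
    linarith
  · -- greatest lower bound: -log Z is in the set
    intro b hb
    apply hb
    refine ⟨θ₀, fun s => (hθ₀pos s).le, hθ₀sum, ?_⟩
    have hterm : ∀ s, f s * θ₀ s + θ₀ s * Real.log (θ₀ s / γ s)
        = θ₀ s * (-Real.log Z) := by
      intro s
      have h1 : θ₀ s / γ s = Real.exp (-f s) / Z := by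
        rw [hθ₀def]; field_simp [hZpos.ne', (hγpos s).ne']
      rw [h1, Real.log_div (Real.exp_ne_zero _) hZpos.ne', Real.log_exp]
      ring
    rw [← Finset.sum_add_distrib]
    simp_rw [hterm]
    rw [← Finset.sum_mul, hθ₀sum, one_mul]
end

section
/- For the two-player game with payoff G(Θ̄,θ) = ⟨p, F(θ)⟩ + ∑_{i=0}^{2} θ_i log(Θ̄_i/Θ_i) + R(θ‖Θ), where F(θ)=∑θ_i v_i, the pair (Θ̄*, θ*) with Θ̄* = θ* = N(p)(λe^{-p₁/2}, μ₁e^{(p₁-p₂)/2}, μ₂e^{p₂/2}) is a saddle point: G(Θ̄, θ*) ≤ G(Θ̄*, θ*) ≤ G(Θ̄*, θ) for all fully supported probability vectors Θ̄, θ. In particular sup_Θ̄ inf_θ G = inf_θ sup_Θ̄ G = 2 log N(p). -/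
open Real

/-- `x log(y/x) ≤ y - x` for positive `x, y`. -/
lemma xlogdiv_le {x y : ℝ} (hx : 0 < x) (hy : 0 < y) :
    x * Real.log (y / x) ≤ y - x := by
  have h := Real.log_le_sub_one_of_pos (div_pos hy hx)
  have hx' : x ≠ 0 := hx.ne'
  calc x * Real.log (y / x) ≤ x * (y / x - 1) := by nlinarith
    _ = y - x := by field_simp

/-- `x - y ≤ x log(x/y)` for positive `x, y`. -/
lemma xlogdiv_ge {x y : ℝ} (hx : 0 < x) (hy : 0 < y) :
    x - y ≤ x * Real.log (x / y) := by
  have h := Real.log_le_sub_one_of_pos (div_pos hy hx)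
  have hlog : Real.log (x / y) = - Real.log (y / x) := by
    rw [← Real.log_inv, inv_div]
  have h2 := mul_le_mul_of_nonneg_left h hx.le
  have h3 : x * (y / x - 1) = y - x := by field_simp
  rw [hlog]
  linarith [h2.trans_eq h3]

set_option maxHeartbeats 1000000

/-- Saddle point property for the importance sampling game payoff
`G(Θ̄,θ) = ⟨p,F(θ)⟩ + ∑ θᵢ log(Θ̄ᵢ/Θᵢ) + R(θ‖Θ)`: the pair
`Θ̄* = θ* = N(p)(λe^{-p₁/2}, μ₁e^{(p₁-p₂)/2}, μ₂e^{p₂/2})` satisfies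
`G(Θ̄,θ*) ≤ G(Θ̄*,θ*) ≤ G(Θ̄*,θ)` over fully supported probability vectors,
and the value of the game is `2 log N(p)`. -/
theorem stmt4 (lam mu1 mu2 : ℝ) (h0 : 0 < lam) (h1 : 0 < mu1) (h2 : 0 < mu2)
    (hsum : lam + mu1 + mu2 = 1) (p : ℝ × ℝ)
    (N : ℝ)
    (hN : N = (lam * Real.exp (-p.1 / 2) + mu1 * Real.exp ((p.1 - p.2) / 2)
        + mu2 * Real.exp (p.2 / 2))⁻¹)
    (G : (ℝ × ℝ × ℝ) → (ℝ × ℝ × ℝ) → ℝ)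
    (hG : G = fun B T =>
      p.1 * (T.1 - T.2.1) + p.2 * (T.2.1 - T.2.2)
        + (T.1 * Real.log (B.1 / lam) + T.2.1 * Real.log (B.2.1 / mu1)
            + T.2.2 * Real.log (B.2.2 / mu2))
        + (T.1 * Real.log (T.1 / lam) + T.2.1 * Real.log (T.2.1 / mu1)
            + T.2.2 * Real.log (T.2.2 / mu2)))
    (star : ℝ × ℝ × ℝ)
    (hstar : star = (N * (lam * Real.exp (-p.1 / 2)),
        N * (mu1 * Real.exp ((p.1 - p.2) / 2)), N * (mu2 * Real.exp (p.2 / 2)))) :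
    (∀ B : ℝ × ℝ × ℝ, 0 < B.1 → 0 < B.2.1 → 0 < B.2.2 → B.1 + B.2.1 + B.2.2 = 1 →
        G B star ≤ G star star) ∧
    (∀ T : ℝ × ℝ × ℝ, 0 < T.1 → 0 < T.2.1 → 0 < T.2.2 → T.1 + T.2.1 + T.2.2 = 1 →
        G star star ≤ G star T) ∧
    G star star = 2 * Real.log N := by
  have hE1 : (0:ℝ) < Real.exp (-p.1 / 2) := Real.exp_pos _
  have hE2 : (0:ℝ) < Real.exp ((p.1 - p.2) / 2) := Real.exp_pos _
  have hE3 : (0:ℝ) < Real.exp (p.2 / 2) := Real.exp_pos _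
  set a := lam * Real.exp (-p.1 / 2) with ha_def
  set b := mu1 * Real.exp ((p.1 - p.2) / 2) with hb_def
  set c := mu2 * Real.exp (p.2 / 2) with hc_def
  have hapos : 0 < a := mul_pos h0 hE1
  have hbpos : 0 < b := mul_pos h1 hE2
  have hcpos : 0 < c := mul_pos h2 hE3
  have hSpos : 0 < a + b + c := by positivity
  have hNpos : 0 < N := by rw [hN]; positivity
  have hs1 : star.1 = N * a := by rw [hstar]
  have hs2 : star.2.1 = N * b := by rw [hstar]
  have hs3 : star.2.2 = N * c := by rw [hstar]
  have hs1pos : 0 < star.1 := by rw [hs1]; positivity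
  have hs2pos : 0 < star.2.1 := by rw [hs2]; positivity
  have hs3pos : 0 < star.2.2 := by rw [hs3]; positivity
  have hsumstar : star.1 + star.2.1 + star.2.2 = 1 := by
    rw [hs1, hs2, hs3, hN]; field_simp
  -- log identities
  have hL1 : Real.log (star.1 / lam) = Real.log N + (-p.1 / 2) := by
    have h : star.1 / lam = N * Real.exp (-p.1 / 2) := by
      rw [hs1, ha_def]; field_simp
    rw [h, Real.log_mul hNpos.ne' hE1.ne', Real.log_exp]
  have hL2 : Real.log (star.2.1 / mu1) = Real.log N + ((p.1 - p.2) / 2) := by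
    have h : star.2.1 / mu1 = N * Real.exp ((p.1 - p.2) / 2) := by
      rw [hs2, hb_def]; field_simp
    rw [h, Real.log_mul hNpos.ne' hE2.ne', Real.log_exp]
  have hL3 : Real.log (star.2.2 / mu2) = Real.log N + (p.2 / 2) := by
    have h : star.2.2 / mu2 = N * Real.exp (p.2 / 2) := by
      rw [hs3, hc_def]; field_simp
    rw [h, Real.log_mul hNpos.ne' hE3.ne', Real.log_exp]
  -- value of the game
  have hval : G star star = 2 * Real.log N := by
    simp only [hG, hL1, hL2, hL3]
    linear_combination (2 * Real.log N) * hsumstar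
  refine ⟨?_, ?_, hval⟩
  · intro B hB1 hB2 hB3 hBsum
    rw [hval]
    simp only [hG, hL1, hL2, hL3]
    have d1 : Real.log (B.1 / lam)
        = Real.log (B.1 / star.1) + (Real.log N + (-p.1 / 2)) := by
      rw [← hL1, ← Real.log_mul (div_pos hB1 hs1pos).ne' (div_pos hs1pos h0).ne']
      congr 1
      field_simp
    have d2 : Real.log (B.2.1 / mu1)
        = Real.log (B.2.1 / star.2.1) + (Real.log N + ((p.1 - p.2) / 2)) := by
      rw [← hL2, ← Real.log_mul (div_pos hB2 hs2pos).ne' (div_pos hs2pos h1).ne']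
      congr 1
      field_simp
    have d3 : Real.log (B.2.2 / mu2)
        = Real.log (B.2.2 / star.2.2) + (Real.log N + (p.2 / 2)) := by
      rw [← hL3, ← Real.log_mul (div_pos hB3 hs3pos).ne' (div_pos hs3pos h2).ne']
      congr 1
      field_simp
    rw [d1, d2, d3]
    have k1 := xlogdiv_le hs1pos hB1
    have k2 := xlogdiv_le hs2pos hB2
    have k3 := xlogdiv_le hs3pos hB3
    have hTN : Real.log N * (star.1 + star.2.1 + star.2.2) = Real.log N := by
      rw [hsumstar, mul_one]
    nlinarith [k1, k2, k3]
  · intro T hT1 hT2 hT3 hTsum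
    rw [hval]
    simp only [hG, hL1, hL2, hL3]
    have d1 : Real.log (T.1 / lam)
        = Real.log (T.1 / star.1) + (Real.log N + (-p.1 / 2)) := by
      rw [← hL1, ← Real.log_mul (div_pos hT1 hs1pos).ne' (div_pos hs1pos h0).ne']
      congr 1
      field_simp
    have d2 : Real.log (T.2.1 / mu1)
        = Real.log (T.2.1 / star.2.1) + (Real.log N + ((p.1 - p.2) / 2)) := by
      rw [← hL2, ← Real.log_mul (div_pos hT2 hs2pos).ne' (div_pos hs2pos h1).ne']
      congr 1
      field_simp
    have d3 : Real.log (T.2.2 / mu2)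
        = Real.log (T.2.2 / star.2.2) + (Real.log N + (p.2 / 2)) := by
      rw [← hL3, ← Real.log_mul (div_pos hT3 hs3pos).ne' (div_pos hs3pos h2).ne']
      congr 1
      field_simp
    rw [d1, d2, d3]
    have k1 := xlogdiv_ge hT1 hs1pos
    have k2 := xlogdiv_ge hT2 hs2pos
    have k3 := xlogdiv_ge hT3 hs3pos
    have hTN : Real.log N * (T.1 + T.2.1 + T.2.2) = Real.log N := by
      rw [hTsum, mul_one]
    nlinarith [k1, k2, k3, hTN]
end

section
/- With the mollified subsolution W^{ε,δ}(x) = -ε log ∑_{k=1}^3 exp(-W̄_k^δ(x)/ε) of the two-node tandem piecewise affine subsolution, for every x = (0, x₂) on the boundary ∂₁ (i.e., x₁ = 0, 0 < x₂ < 1) we have ⟨DW^{ε,δ}(x), d₁⟩ ≥ -2γ exp(-δ/ε), where d₁ = (1,-1). -/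
open Real

/-- On the boundary `∂₁ = {(0,x₂) : 0 < x₂ < 1}` the mollified subsolution
satisfies `⟨DW^{ε,δ}(x), d₁⟩ ≥ -2γ exp(-δ/ε)` where `d₁ = (1,-1)`,
`DW^{ε,δ}(x) = ∑ₖ ρ_k^{ε,δ}(x) r_k`, `r₁ = 2γ(-1,-1)`, `r₂ = (-2γ,0)`,
`r₃ = (0,0)`, and `ρ_k^{ε,δ}` are the softmax weights of
`W̄_k^δ(x) = ⟨r_k,x⟩ + 2γ - kδ`. -/
theorem stmt9 (lam mu1 mu2 γ ε δ : ℝ) (h0 : 0 < lam) (h1 : 0 < mu1) (h2 : 0 < mu2)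
    (hsum : lam + mu1 + mu2 = 1) (hord : mu2 ≤ mu1) (hstab : lam < mu2)
    (hγ : γ = Real.log (mu2 / lam)) (hε : 0 < ε) (hδ : 0 < δ)
    (x2 : ℝ) (hx2 : 0 < x2) (hx2' : x2 < 1)
    (W1 W2 W3 : ℝ)
    (hW1 : W1 = 2 * γ * (-(0:ℝ)) + 2 * γ * (-x2) + 2 * γ - δ)
    (hW2 : W2 = (-2 * γ) * 0 + 0 * x2 + 2 * γ - 2 * δ)
    (hW3 : W3 = 0 * (0:ℝ) + 0 * x2 + 2 * γ - 3 * δ)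
    (ρ1 ρ2 ρ3 : ℝ)
    (hρ1 : ρ1 = Real.exp (-W1 / ε)
        / (Real.exp (-W1 / ε) + Real.exp (-W2 / ε) + Real.exp (-W3 / ε)))
    (hρ2 : ρ2 = Real.exp (-W2 / ε)
        / (Real.exp (-W1 / ε) + Real.exp (-W2 / ε) + Real.exp (-W3 / ε)))
    (hρ3 : ρ3 = Real.exp (-W3 / ε)
        / (Real.exp (-W1 / ε) + Real.exp (-W2 / ε) + Real.exp (-W3 / ε))) :
    -(2 * γ * Real.exp (-δ / ε)) ≤
      ρ1 * (2 * γ * (-1) * 1 + 2 * γ * (-1) * (-1))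
        + ρ2 * ((-2 * γ) * 1 + 0 * (-1))
        + ρ3 * (0 * 1 + 0 * (-1)) := by
  have hγpos : 0 < γ := by
    rw [hγ]
    exact Real.log_pos (by rw [lt_div_iff₀ h0]; linarith)
  set E1 := Real.exp (-W1 / ε)
  set E2 := Real.exp (-W2 / ε)
  set E3 := Real.exp (-W3 / ε)
  have hE1 : 0 < E1 := Real.exp_pos _
  have hE2 : 0 < E2 := Real.exp_pos _
  have hE3 : 0 < E3 := Real.exp_pos _
  have hS : 0 < E1 + E2 + E3 := by linarith
  have hρ2le : ρ2 ≤ Real.exp (-δ / ε) := by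
    have h23 : E2 = Real.exp (-δ / ε) * E3 := by
      rw [show E2 = Real.exp (-W2 / ε) from rfl, show E3 = Real.exp (-W3 / ε) from rfl,
        ← Real.exp_add]
      congr 1
      field_simp
      rw [hW2, hW3]; ring
    rw [hρ2, div_le_iff₀ hS, h23]
    have hexp : 0 < Real.exp (-δ / ε) := Real.exp_pos _
    nlinarith
  have : ρ2 * (2 * γ) ≤ Real.exp (-δ / ε) * (2 * γ) :=
    mul_le_mul_of_nonneg_right hρ2le (by linarith)
  nlinarith
end

section
/- Let {Q(k)} be a process whose increments are uniformly bounded by M and satisfy E[Q(k+1) - Q(k) | F_k] = -1 for all k (where F_k is the natural filtration). Define h(z;α) = log E_z exp(α(Q(1)-Q(0))), H(α) = sup_z h(z;α), and L(β) = sup_α [αβ - H(α)]. Then H is convex, Lipschitz with constant M, H(0) = 0, H is differentiable at 0 with H'(0) = -1, L is convex and nonnegative, and L(β) = 0 if and only if β = -1. -/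
/-!
Each `h z` is the cumulant generating function of the bounded increment `X = Q 1 - Q 0` under
`P z`. Its first and second derivatives are the mean and the variance of `X` under an
exponentially tilted measure, so it is convex and `M`-Lipschitz, and by Jensen's inequality and
Hoeffding's lemma it lies between `-α` and `-α + M²α²/2`, the mean of `X` being `-1` by the drift
condition. All of this passes to the supremum `H`, the two bounds squeeze `H'(0) = -1`, and
`L β = 0` says that `α ↦ H α - α β` is minimal at `0`, which forces `β = H'(0)`.
-/

open MeasureTheory ProbabilityTheory Real Filter Topology Asymptotics

namespace ProbabilityTheory

variable {Ω : Type*} {mΩ : MeasurableSpace Ω} {μ : Measure Ω} {X : Ω → ℝ} {M : ℝ}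

lemma cgf_sub_const [IsProbabilityMeasure μ] {t : ℝ}
    (ht : Integrable (fun ω => exp (t * X ω)) μ) (c : ℝ) :
    cgf (fun ω => X ω - c) μ t = cgf X μ t - t * c := by
  simp_rw [cgf, sub_eq_add_neg, mgf_add_const,
    log_mul (mgf_pos ht).ne' (exp_pos _).ne', log_exp, mul_neg]

section BoundedCGF

variable [IsProbabilityMeasure μ] (hX : AEMeasurable X μ) (hXM : ∀ᵐ ω ∂μ, |X ω| ≤ M)
include hX hXM

lemma integrable_exp_mul_of_abs_le_const (t : ℝ) : Integrable (fun ω => exp (t * X ω)) μ :=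
  integrable_exp_mul_of_mem_Icc hX (hXM.mono fun _ => abs_le.1)

lemma mem_interior_integrableExpSet_of_abs_le (t : ℝ) : t ∈ interior (integrableExpSet X μ) := by
  have : integrableExpSet X μ = Set.univ :=
    Set.eq_univ_of_forall (integrable_exp_mul_of_abs_le_const hX hXM)
  simp [this]

lemma analyticAt_cgf_of_abs_le (t : ℝ) : AnalyticAt ℝ (cgf X μ) t :=
  analyticAt_cgf (mem_interior_integrableExpSet_of_abs_le hX hXM t)

lemma abs_deriv_cgf_le (t : ℝ) : |deriv (cgf X μ) t| ≤ M := by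
  have := isProbabilityMeasure_tilted (integrable_exp_mul_of_abs_le_const hX hXM t)
  rw [← integral_tilted_mul_self (mem_interior_integrableExpSet_of_abs_le hX hXM t)]
  have hXM' : ∀ᵐ ω ∂μ.tilted (t * X ·), ‖X ω‖ ≤ M :=
    (tilted_absolutelyContinuous μ _).ae_le hXM
  have := norm_integral_le_of_norm_le_const hXM'
  rwa [probReal_univ, mul_one, Real.norm_eq_abs] at this

lemma lipschitzWith_cgf_of_abs_le : LipschitzWith M.toNNReal (cgf X μ) :=
  lipschitzWith_of_nnnorm_deriv_le (fun t => (analyticAt_cgf_of_abs_le hX hXM t).differentiableAt)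
    fun t => by
      rw [← NNReal.coe_le_coe, coe_nnnorm, Real.norm_eq_abs]
      exact (abs_deriv_cgf_le hX hXM t).trans (Real.le_coe_toNNReal M)

lemma convexOn_cgf_of_abs_le : ConvexOn ℝ Set.univ (cgf X μ) := by
  have hint := mem_interior_integrableExpSet_of_abs_le hX hXM
  refine convexOn_univ_of_deriv2_nonneg
    (fun t => (analyticAt_cgf_of_abs_le hX hXM t).differentiableAt)
    (fun t => (analyticOnNhd_cgf.deriv t (hint t)).differentiableAt) fun t => ?_
  rw [← iteratedDeriv_eq_iterate, ← variance_tilted_mul (hint t)]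
  exact variance_nonneg _ _

lemma mul_integral_le_cgf (t : ℝ) : t * μ[X] ≤ cgf X μ t := by
  have hint := integrable_exp_mul_of_abs_le_const hX hXM t
  rw [cgf, le_log_iff_exp_le (mgf_pos hint), mgf]
  have := convexOn_exp.map_integral_le continuous_exp.continuousOn isClosed_univ
    (ae_of_all _ fun _ => Set.mem_univ _)
    ((Integrable.of_mem_Icc (-M) M hX (hXM.mono fun _ => abs_le.1)).const_mul t) hint
  simpa [integral_const_mul] using this

lemma cgf_le_mul_integral_add_sq (t : ℝ) : cgf X μ t ≤ t * μ[X] + M ^ 2 * t ^ 2 / 2 := by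
  have hoeffding := (hasSubgaussianMGF_of_mem_Icc hX (hXM.mono fun _ => abs_le.1)).cgf_le t
  rw [cgf_sub_const (integrable_exp_mul_of_abs_le_const hX hXM t)] at hoeffding
  have hc : (((‖M - -M‖₊ / 2) ^ 2 : NNReal) : ℝ) = M ^ 2 := by
    simp only [NNReal.coe_pow, NNReal.coe_div, NNReal.coe_ofNat, coe_nnnorm, Real.norm_eq_abs,
      sub_neg_eq_add, ← two_mul, abs_mul, abs_two]
    rw [mul_div_cancel_left₀ _ two_ne_zero, sq_abs]
  rw [hc] at hoeffding
  linarith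

end BoundedCGF

end ProbabilityTheory

section ciSup

variable {ι : Type*} [Nonempty ι]

lemma convexOn_ciSup {E : Type*} [AddCommMonoid E] [Module ℝ E] {s : Set E} {f : ι → E → ℝ}
    (hf : ∀ i, ConvexOn ℝ s (f i)) (hbdd : ∀ x ∈ s, BddAbove (Set.range fun i => f i x)) :
    ConvexOn ℝ s fun x => ⨆ i, f i x := by
  refine ⟨(hf (Classical.arbitrary ι)).1, fun x hx y hy a b ha hb hab => ?_⟩
  dsimp only
  refine ciSup_le fun i => ((hf i).2 hx hy ha hb hab).trans ?_
  gcongr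
  · exact le_ciSup (hbdd x hx) i
  · exact le_ciSup (hbdd y hy) i

lemma lipschitzWith_ciSup {α : Type*} [PseudoMetricSpace α] {f : ι → α → ℝ} {K : NNReal}
    (hf : ∀ i, LipschitzWith K (f i)) (hbdd : ∀ x, BddAbove (Set.range fun i => f i x)) :
    LipschitzWith K fun x => ⨆ i, f i x :=
  .of_le_add_mul K fun x y => ciSup_le fun i =>
    ((hf i).le_add_mul x y).trans (by gcongr; exact le_ciSup (hbdd y) i)

end ciSup

lemma HasDerivAt.squeeze {f g k : ℝ → ℝ} {a x : ℝ} (hg : HasDerivAt g a x)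
    (hk : HasDerivAt k a x) (hgf : g ≤ᶠ[𝓝 x] f) (hfk : f ≤ᶠ[𝓝 x] k) (hgx : g x = f x)
    (hkx : k x = f x) : HasDerivAt f a x := by
  rw [hasDerivAt_iff_isLittleO] at *
  refine (IsBigO.of_bound 1 ?_).trans_isLittleO (hg.norm_left.add hk.norm_left)
  filter_upwards [hgf, hfk] with y hgy hky
  simp only [smul_eq_mul, Real.norm_eq_abs, one_mul]
  rw [hgx, hkx] at *
  refine (abs_le.2 ⟨?_, ?_⟩).trans (le_abs_self _)
  · linarith [neg_abs_le (g y - f x - (y - x) * a), abs_nonneg (k y - f x - (y - x) * a)]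
  · linarith [le_abs_self (k y - f x - (y - x) * a), abs_nonneg (g y - f x - (y - x) * a)]

noncomputable def legendre (f : ℝ → ℝ) (β : ℝ) : EReal :=
  ⨆ α : ℝ, ((α * β - f α : ℝ) : EReal)

lemma le_legendre (f : ℝ → ℝ) (α β : ℝ) : ((α * β - f α : ℝ) : EReal) ≤ legendre f β :=
  le_iSup (fun α : ℝ => ((α * β - f α : ℝ) : EReal)) α

lemma legendre_le_zero_iff {f : ℝ → ℝ} {β : ℝ} : legendre f β ≤ 0 ↔ ∀ α, α * β ≤ f α := by
  simp only [legendre, iSup_le_iff, EReal.coe_nonpos, sub_nonpos]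

lemma legendre_convex_combination_le (f : ℝ → ℝ) {a b : ℝ} (ha : 0 ≤ a) (hb : 0 ≤ b)
    (hab : a + b = 1) (x y : ℝ) :
    legendre f (a * x + b * y) ≤ (a : EReal) * legendre f x + (b : EReal) * legendre f y := by
  refine iSup_le fun α => ?_
  have hsplit : α * (a * x + b * y) - f α = a * (α * x - f α) + b * (α * y - f α) := by
    linear_combination f α * hab
  rw [hsplit, EReal.coe_add, EReal.coe_mul, EReal.coe_mul]
  gcongr
  · exact le_legendre f α x
  · exact le_legendre f α y

lemma legendre_nonneg {f : ℝ → ℝ} (hf : f 0 = 0) (β : ℝ) : 0 ≤ legendre f β := by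
  simpa [hf] using le_legendre f 0 β

lemma legendre_eq_zero_iff {f : ℝ → ℝ} {f' : ℝ} (hf : f 0 = 0) (hf' : HasDerivAt f f' 0)
    (htangent : ∀ α, α * f' ≤ f α) (β : ℝ) : legendre f β = 0 ↔ β = f' := by
  rw [← (legendre_nonneg hf β).ge_iff_eq', legendre_le_zero_iff]
  constructor
  · intro hβ
    have hmin : IsLocalMin (fun α => f α - α * β) 0 :=
      Filter.Eventually.of_forall fun α => by simpa [hf] using hβ α
    linarith [hmin.hasDerivAt_eq_zero (hf'.sub (hasDerivAt_mul_const β))]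
  · rintro rfl
    exact htangent

theorem stmt16_general {Ω : Type*} [mΩ : MeasurableSpace Ω]
    {Z : Type*} [Nonempty Z]
    (P : Z → Measure Ω) (hP : ∀ z, IsProbabilityMeasure (P z))
    (F : Filtration ℕ mΩ) (Q : ℕ → Ω → ℝ)
    (M : ℝ)
    (hbdd : ∀ k ω, |Q (k + 1) ω - Q k ω| ≤ M)
    (hdrift : ∀ z k,
      (P z)[fun ω => Q (k + 1) ω - Q k ω|F k] =ᵐ[P z] fun _ => (-1 : ℝ))
    (h : Z → ℝ → ℝ)
    (hh : ∀ z α, h z α = Real.log (∫ ω, Real.exp (α * (Q 1 ω - Q 0 ω)) ∂(P z)))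
    (H : ℝ → ℝ) (hHdef : ∀ α, H α = ⨆ z, h z α)
    (L : ℝ → EReal)
    (hLdef : ∀ β, L β = ⨆ α : ℝ, ((α * β - H α : ℝ) : EReal)) :
    ConvexOn ℝ Set.univ H ∧
    LipschitzWith M.toNNReal H ∧
    H 0 = 0 ∧
    HasDerivAt H (-1) 0 ∧
    (∀ x y a b : ℝ, 0 ≤ a → 0 ≤ b → a + b = 1 →
      L (a * x + b * y) ≤ (a : EReal) * L x + (b : EReal) * L y) ∧
    (∀ β, 0 ≤ L β) ∧
    (∀ β, L β = 0 ↔ β = -1) := by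
  set X : Ω → ℝ := fun ω => Q 1 ω - Q 0 ω
  have hmean (z : Z) : (P z)[X] = -1 := by
    rw [← integral_condExp (F.le 0), integral_congr_ae (hdrift z 0)]
    simp
  -- a non-integrable function has integral `0`, so the drift condition forces integrability
  have hX (z : Z) : AEMeasurable X (P z) :=
    (Integrable.of_integral_ne_zero (by rw [hmean z]; norm_num)).aemeasurable
  have hXM (z : Z) : ∀ᵐ ω ∂(P z), |X ω| ≤ M := ae_of_all _ (hbdd 0)
  have hupper (z : Z) (α : ℝ) : cgf X (P z) α ≤ -α + M ^ 2 * α ^ 2 / 2 := by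
    simpa [hmean z] using cgf_le_mul_integral_add_sq (hX z) (hXM z) α
  have hbddAbove (α : ℝ) : BddAbove (Set.range fun z => cgf X (P z) α) :=
    ⟨_, Set.forall_mem_range.2 (hupper · α)⟩
  obtain rfl : H = fun α => ⨆ z, cgf X (P z) α := funext fun α => by
    simp only [hHdef, hh]; rfl
  obtain rfl : L = legendre _ := funext hLdef
  have hHlower (α : ℝ) : -α ≤ ⨆ z, cgf X (P z) α := by
    obtain z := Classical.arbitrary Z
    simpa [hmean z] using (mul_integral_le_cgf (hX z) (hXM z) α).trans (le_ciSup (hbddAbove α) z)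
  have hHupper (α : ℝ) : ⨆ z, cgf X (P z) α ≤ -α + M ^ 2 * α ^ 2 / 2 := ciSup_le (hupper · α)
  have hH0 : ⨆ z, cgf X (P z) 0 = 0 :=
    le_antisymm (by linarith [hHupper 0]) (by linarith [hHlower 0])
  have hquadratic : HasDerivAt (fun α : ℝ => -α + M ^ 2 * α ^ 2 / 2) (-1) 0 := by
    simpa using (hasDerivAt_id' 0).fun_neg.fun_add
      (((hasDerivAt_pow 2 0).const_mul (M ^ 2)).div_const 2)
  have hHderiv : HasDerivAt (fun α => ⨆ z, cgf X (P z) α) (-1) 0 :=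
    (hasDerivAt_neg 0).squeeze hquadratic (.of_forall hHlower) (.of_forall hHupper)
      (by rw [hH0, neg_zero]) (by rw [hH0]; ring)
  exact ⟨convexOn_ciSup (fun z => convexOn_cgf_of_abs_le (hX z) (hXM z)) fun α _ => hbddAbove α,
    lipschitzWith_ciSup (fun z => lipschitzWith_cgf_of_abs_le (hX z) (hXM z)) hbddAbove,
    hH0, hHderiv, fun x y a b ha hb hab => legendre_convex_combination_le _ ha hb hab x y,
    legendre_nonneg hH0, legendre_eq_zero_iff hH0 hHderiv fun α => by simpa using hHlower α⟩

/-- Properties of the log-moment generating function `H` and its Legendre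
transform `L` for a process `Q` with increments uniformly bounded by `M`
and conditional drift `-1`: `H` is convex, `M`-Lipschitz, `H(0) = 0`,
`H'(0) = -1`; `L` is convex, nonnegative, and `L(β) = 0 ↔ β = -1`. -/
theorem stmt16 {Ω : Type*} [mΩ : MeasurableSpace Ω]
    {Z : Type*} [Countable Z] [Nonempty Z]
    (P : Z → Measure Ω) (hP : ∀ z, IsProbabilityMeasure (P z))
    (F : Filtration ℕ mΩ) (Q : ℕ → Ω → ℝ)
    (hadapted : ∀ k, Measurable[F k] (Q k))
    (M : ℝ) (hM : 0 < M)
    (hbdd : ∀ k ω, |Q (k + 1) ω - Q k ω| ≤ M)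
    (hdrift : ∀ z k,
      (P z)[fun ω => Q (k + 1) ω - Q k ω|F k] =ᵐ[P z] fun _ => (-1 : ℝ))
    (h : Z → ℝ → ℝ)
    (hh : ∀ z α, h z α = Real.log (∫ ω, Real.exp (α * (Q 1 ω - Q 0 ω)) ∂(P z)))
    (H : ℝ → ℝ) (hHdef : ∀ α, H α = ⨆ z, h z α)
    (L : ℝ → EReal)
    (hLdef : ∀ β, L β = ⨆ α : ℝ, ((α * β - H α : ℝ) : EReal)) :
    ConvexOn ℝ Set.univ H ∧
    LipschitzWith M.toNNReal H ∧
    H 0 = 0 ∧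
    HasDerivAt H (-1) 0 ∧
    (∀ x y a b : ℝ, 0 ≤ a → 0 ≤ b → a + b = 1 →
      L (a * x + b * y) ≤ (a : EReal) * L x + (b : EReal) * L y) ∧
    (∀ β, 0 ≤ L β) ∧
    (∀ β, L β = 0 ↔ β = -1) :=
  stmt16_general (mΩ := mΩ) P hP F Q M hbdd hdrift h hh H hHdef L hLdef
end

section
/- Monotonicity of the tandem queue: let Z^z denote the two-node tandem queue path started at z∈ℤ₊², driven by a common sequence Y(k) ∈ {v₀,v₁,v₂} via Z(k+1) = Z(k) + π[Z(k),Y(k+1)], where π[z,y] = 0 if z_i = 0 and y = v_i (i=1,2), and π[z,y] = y otherwise. If z̄ ≤ z componentwise, then for all k: Z^{z̄}(k) ≤ Z^z(k) componentwise, and g(Z^z(k)) - g(Z^{z̄}(k)) ≤ g(z) - g(z̄), where g(z) = z₁ + z₂. -/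
/-- One transition of the two-node tandem queue: `v₀ = (1,0)` (arrival),
`v₁ = (-1,1)` (service at node 1), `v₂ = (0,-1)` (service at node 2),
with jumps suppressed (`π[z,vᵢ] = 0`) when the corresponding queue is empty. -/
def tandemStep (z : ℕ × ℕ) (y : Fin 3) : ℕ × ℕ :=
  if y = 0 then (z.1 + 1, z.2)
  else if y = 1 then (if z.1 = 0 then z else (z.1 - 1, z.2 + 1))
  else (if z.2 = 0 then z else (z.1, z.2 - 1))

lemma tandemStep_mono (w z : ℕ × ℕ) (y : Fin 3)
    (h1 : w.1 ≤ z.1) (h2 : w.2 ≤ z.2) :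
    (tandemStep w y).1 ≤ (tandemStep z y).1 ∧
    (tandemStep w y).2 ≤ (tandemStep z y).2 ∧
    (tandemStep z y).1 + (tandemStep z y).2 + (w.1 + w.2) ≤
      z.1 + z.2 + ((tandemStep w y).1 + (tandemStep w y).2) := by
  fin_cases y <;> simp [tandemStep] <;> (try split_ifs) <;> simp_all <;> omega

/-- Monotonicity of the tandem queue in the initial condition: if two paths
are driven by the same sequence `Y` and start at `z̄ ≤ z`, then
`Z^{z̄}(k) ≤ Z^z(k)` componentwise and
`g(Z^z(k)) - g(Z^{z̄}(k)) ≤ g(z) - g(z̄)` where `g(z) = z₁ + z₂`. -/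
theorem stmt18 (Y : ℕ → Fin 3) (zb z : ℕ × ℕ)
    (hle1 : zb.1 ≤ z.1) (hle2 : zb.2 ≤ z.2)
    (Zb Zz : ℕ → ℕ × ℕ)
    (hZb0 : Zb 0 = zb) (hZz0 : Zz 0 = z)
    (hZb : ∀ k, Zb (k + 1) = tandemStep (Zb k) (Y (k + 1)))
    (hZz : ∀ k, Zz (k + 1) = tandemStep (Zz k) (Y (k + 1))) :
    ∀ k, (Zb k).1 ≤ (Zz k).1 ∧ (Zb k).2 ≤ (Zz k).2 ∧
      (Zz k).1 + (Zz k).2 + (zb.1 + zb.2) ≤ z.1 + z.2 + ((Zb k).1 + (Zb k).2) := by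
  intro k
  induction k with
  | zero => rw [hZb0, hZz0]; omega
  | succ n ih =>
    obtain ⟨ih1, ih2, ih3⟩ := ih
    have := tandemStep_mono (Zb n) (Zz n) (Y (n + 1)) ih1 ih2
    rw [hZb n, hZz n]
    omega
end
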